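/- arXiv:1410.5161 — 2 statements merged into one kernel-verified Lean document; each statement's English description precedes it below -/
import Mathlib

section
/- Let (H, α) be a monoidal Hom-bialgebra with Drinfeld twist σ and inverse ϱ, and define Δᵠ(x) = (σΔ(x))ϱ. Then Hᵠ = (H, α, m, η, Δᵠ, ε) is a Hom-bialgebra: (H, α, Δᵠ, ε) satisfies Hom-coassociativity α(x₍₁₎)⊗Δᵠ(x₍₂₎) = Δᵠ(x₍₁₎)⊗α(x₍₂₎) and Hom-counitality ε(x₍₁₎)x₍₂₎ = x₍₁₎ε(x₍₂₎) = α(x), where Δᵠ(x) = x₍₁₎⊗x₍₂₎, and Δᵠ, ε are Hom-algebra maps. -/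
open TensorProduct

noncomputable section
namespace HomTwist

variable {k : Type*} [CommRing k]

section Defs
variable {H₁ H₂ A B : Type*} [AddCommGroup H₁] [Module k H₁] [AddCommGroup H₂] [Module k H₂]
  [AddCommGroup A] [Module k A] [AddCommGroup B] [Module k B]

/-- The componentwise "action" of `H₁ ⊗ H₂` on `A ⊗ B` induced by bilinear actions
`f : H₁ → A → A` and `g : H₂ → B → B`:  `(h₁ ⊗ h₂) • (a ⊗ b) = (f h₁ a) ⊗ (g h₂ b)`. -/
def pairMap (f : H₁ →ₗ[k] A →ₗ[k] A) (g : H₂ →ₗ[k] B →ₗ[k] B) :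
    (H₁ ⊗[k] H₂) →ₗ[k] (A ⊗[k] B) →ₗ[k] A ⊗[k] B :=
  TensorProduct.lift (((TensorProduct.mapBilinear (RingHom.id k) A B A B).comp f).compl₂ g)

end Defs

section Structures
variable {H : Type*} [AddCommGroup H] [Module k H]

/-- Componentwise product on `H ⊗ H` induced by a bilinear multiplication on `H`. -/
def mulT (mul : H →ₗ[k] H →ₗ[k] H) : (H ⊗[k] H) →ₗ[k] (H ⊗[k] H) →ₗ[k] H ⊗[k] H :=
  pairMap mul mul

/-- Componentwise product on `H ⊗ (H ⊗ H)`. -/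
def mulT3 (mul : H →ₗ[k] H →ₗ[k] H) :
    (H ⊗[k] (H ⊗[k] H)) →ₗ[k] (H ⊗[k] (H ⊗[k] H)) →ₗ[k] H ⊗[k] (H ⊗[k] H) :=
  pairMap mul (mulT mul)

/-- `(r ⊗ R) ↦ r⁽¹⁾ ⊗ (R⁽¹⁾ ⊗ r⁽²⁾R⁽²⁾)`. -/
def hexA (mul : H →ₗ[k] H →ₗ[k] H) :
    ((H ⊗[k] H) ⊗[k] (H ⊗[k] H)) →ₗ[k] H ⊗[k] (H ⊗[k] H) :=
  (TensorProduct.assoc k H H H).toLinearMap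
    ∘ₗ TensorProduct.map LinearMap.id (TensorProduct.lift mul)
    ∘ₗ (TensorProduct.tensorTensorTensorComm k H H H H).toLinearMap

/-- `(r ⊗ R) ↦ r⁽¹⁾R⁽¹⁾ ⊗ (R⁽²⁾ ⊗ r⁽²⁾)`. -/
def hexB (mul : H →ₗ[k] H →ₗ[k] H) :
    ((H ⊗[k] H) ⊗[k] (H ⊗[k] H)) →ₗ[k] H ⊗[k] (H ⊗[k] H) :=
  TensorProduct.map (TensorProduct.lift mul) (TensorProduct.comm k H H).toLinearMap
    ∘ₗ (TensorProduct.tensorTensorTensorComm k H H H H).toLinearMap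

/-- Axioms of a monoidal Hom-bialgebra (Caenepeel–Goyvaerts). -/
structure IsMonHomBialgebra (mul : H →ₗ[k] H →ₗ[k] H) (one : H) (alpha : H ≃ₗ[k] H)
    (comul : H →ₗ[k] H ⊗[k] H) (counit : H →ₗ[k] k) : Prop where
  alpha_mul : ∀ a b, alpha (mul a b) = mul (alpha a) (alpha b)
  hom_assoc : ∀ a b c, mul (alpha a) (mul b c) = mul (mul a b) (alpha c)
  alpha_one : alpha one = one
  one_mul' : ∀ a, mul one a = alpha a
  mul_one' : ∀ a, mul a one = alpha a
  comul_alpha : ∀ c, comul (alpha c)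
      = TensorProduct.map alpha.toLinearMap alpha.toLinearMap (comul c)
  hom_coassoc : ∀ c,
      TensorProduct.map alpha.symm.toLinearMap comul (comul c)
        = TensorProduct.assoc k H H H
            (TensorProduct.map comul alpha.symm.toLinearMap (comul c))
  counit_alpha : ∀ c, counit (alpha c) = counit c
  counit_id : ∀ c, TensorProduct.lid k H
      (TensorProduct.map counit LinearMap.id (comul c)) = alpha.symm c
  id_counit : ∀ c, TensorProduct.rid k H
      (TensorProduct.map LinearMap.id counit (comul c)) = alpha.symm c
  comul_mul : ∀ a b, comul (mul a b) = mulT mul (comul a) (comul b)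
  comul_one : comul one = one ⊗ₜ[k] one
  counit_mul : ∀ a b, counit (mul a b) = counit a * counit b
  counit_one : counit one = 1

/-- Axioms of a (Makhlouf–Silvestrov) Hom-bialgebra (with bijective structure map). -/
structure IsHomBialgebra (mul : H →ₗ[k] H →ₗ[k] H) (one : H) (alpha : H ≃ₗ[k] H)
    (comul : H →ₗ[k] H ⊗[k] H) (counit : H →ₗ[k] k) : Prop where
  alpha_mul : ∀ a b, alpha (mul a b) = mul (alpha a) (alpha b)
  hom_assoc : ∀ a b c, mul (alpha a) (mul b c) = mul (mul a b) (alpha c)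
  alpha_one : alpha one = one
  one_mul' : ∀ a, mul one a = alpha a
  mul_one' : ∀ a, mul a one = alpha a
  comul_alpha : ∀ c, comul (alpha c)
      = TensorProduct.map alpha.toLinearMap alpha.toLinearMap (comul c)
  hom_coassoc : ∀ c,
      TensorProduct.map alpha.toLinearMap comul (comul c)
        = TensorProduct.assoc k H H H
            (TensorProduct.map comul alpha.toLinearMap (comul c))
  counit_alpha : ∀ c, counit (alpha c) = counit c
  counit_id : ∀ c, TensorProduct.lid k H
      (TensorProduct.map counit LinearMap.id (comul c)) = alpha c
  id_counit : ∀ c, TensorProduct.rid k H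
      (TensorProduct.map LinearMap.id counit (comul c)) = alpha c
  comul_mul : ∀ a b, comul (mul a b) = mulT mul (comul a) (comul b)
  comul_one : comul one = one ⊗ₜ[k] one
  counit_mul : ∀ a b, counit (mul a b) = counit a * counit b
  counit_one : counit one = 1

/-- Axioms of an ordinary (possibly noncommutative) bialgebra, given by raw data. -/
structure IsBialgebra (mul : H →ₗ[k] H →ₗ[k] H) (one : H)
    (comul : H →ₗ[k] H ⊗[k] H) (counit : H →ₗ[k] k) : Prop where
  assoc : ∀ a b c, mul (mul a b) c = mul a (mul b c)
  one_mul' : ∀ a, mul one a = a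
  mul_one' : ∀ a, mul a one = a
  coassoc : ∀ c, TensorProduct.map LinearMap.id comul (comul c)
      = TensorProduct.assoc k H H H (TensorProduct.map comul LinearMap.id (comul c))
  counit_id : ∀ c, TensorProduct.lid k H
      (TensorProduct.map counit LinearMap.id (comul c)) = c
  id_counit : ∀ c, TensorProduct.rid k H
      (TensorProduct.map LinearMap.id counit (comul c)) = c
  comul_mul : ∀ a b, comul (mul a b) = mulT mul (comul a) (comul b)
  comul_one : comul one = one ⊗ₜ[k] one
  counit_mul : ∀ a b, counit (mul a b) = counit a * counit b
  counit_one : counit one = 1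

/-- A Drinfeld twist `σ` (with inverse `ϱ`) for a monoidal Hom-bialgebra. -/
structure IsTwist (mul : H →ₗ[k] H →ₗ[k] H) (one : H) (alpha : H ≃ₗ[k] H)
    (comul : H →ₗ[k] H ⊗[k] H) (counit : H →ₗ[k] k) (σ ϱ : H ⊗[k] H) : Prop where
  mul_inv : mulT mul σ ϱ = one ⊗ₜ[k] one
  inv_mul : mulT mul ϱ σ = one ⊗ₜ[k] one
  T1 : TensorProduct.map alpha.toLinearMap alpha.toLinearMap σ = σ
  T2l : TensorProduct.lid k H (TensorProduct.map counit LinearMap.id σ) = one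
  T2r : TensorProduct.rid k H (TensorProduct.map LinearMap.id counit σ) = one
  T3 : TensorProduct.map LinearMap.id (mulT mul σ)
        (TensorProduct.map LinearMap.id comul σ)
      = TensorProduct.assoc k H H H
          (TensorProduct.map (mulT mul σ) LinearMap.id
            (TensorProduct.map comul LinearMap.id σ))

/-- The `R`-matrix axioms (Q1)–(Q4) for a monoidal Hom-bialgebra. -/
structure IsRMatrix (mul : H →ₗ[k] H →ₗ[k] H) (alpha : H ≃ₗ[k] H)
    (comul : H →ₗ[k] H ⊗[k] H) (R : H ⊗[k] H) : Prop where
  Q1 : TensorProduct.map alpha.toLinearMap alpha.toLinearMap R = R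
  Q2 : ∀ h, mulT mul R (comul h)
      = mulT mul (TensorProduct.comm k H H (comul h)) R
  Q3 : TensorProduct.assoc k H H H (TensorProduct.map comul LinearMap.id R)
      = hexA mul (R ⊗ₜ[k] R)
  Q4 : TensorProduct.map LinearMap.id comul R = hexB mul (R ⊗ₜ[k] R)

/-- Axioms of a monoidal Hom-algebra. -/
structure IsMonHomAlgebra {A : Type*} [AddCommGroup A] [Module k A]
    (mul : A →ₗ[k] A →ₗ[k] A) (one : A) (alpha : A ≃ₗ[k] A) : Prop where
  alpha_mul : ∀ a b, alpha (mul a b) = mul (alpha a) (alpha b)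
  hom_assoc : ∀ a b c, mul (alpha a) (mul b c) = mul (mul a b) (alpha c)
  alpha_one : alpha one = one
  one_mul' : ∀ a, mul one a = alpha a
  mul_one' : ∀ a, mul a one = alpha a

/-- Axioms of a monoidal Hom-coalgebra. -/
structure IsMonHomCoalgebra {C : Type*} [AddCommGroup C] [Module k C]
    (comul : C →ₗ[k] C ⊗[k] C) (counit : C →ₗ[k] k) (alpha : C ≃ₗ[k] C) : Prop where
  comul_alpha : ∀ c, comul (alpha c)
      = TensorProduct.map alpha.toLinearMap alpha.toLinearMap (comul c)
  hom_coassoc : ∀ c,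
      TensorProduct.map alpha.symm.toLinearMap comul (comul c)
        = TensorProduct.assoc k C C C
            (TensorProduct.map comul alpha.symm.toLinearMap (comul c))
  counit_alpha : ∀ c, counit (alpha c) = counit c
  counit_id : ∀ c, TensorProduct.lid k C
      (TensorProduct.map counit LinearMap.id (comul c)) = alpha.symm c
  id_counit : ∀ c, TensorProduct.rid k C
      (TensorProduct.map LinearMap.id counit (comul c)) = alpha.symm c

/-- Axioms of a left `H`-Hom-module. -/
structure IsHomModule {M : Type*} [AddCommGroup M] [Module k M]
    (mul : H →ₗ[k] H →ₗ[k] H) (one : H) (alpha : H ≃ₗ[k] H)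
    (alM : M ≃ₗ[k] M) (act : H →ₗ[k] M →ₗ[k] M) : Prop where
  compat : ∀ h m, alM (act h m) = act (alpha h) (alM m)
  hom_smul : ∀ h h' m, act (alpha h) (act h' m) = act (mul h h') (alM m)
  one_smul' : ∀ m, act one m = alM m

/-- The twisted coproduct `Δᵠ(x) = (σ Δ(x)) ϱ`. -/
def twistComul (mul : H →ₗ[k] H →ₗ[k] H) (comul : H →ₗ[k] H ⊗[k] H)
    (σ ϱ : H ⊗[k] H) : H →ₗ[k] H ⊗[k] H :=
  ((mulT mul).flip ϱ) ∘ₗ (mulT mul σ) ∘ₗ comul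

end Structures
end HomTwist
end

/-!
Since `α` is bijective, `a ⋆ b := α⁻¹(ab)` is an associative product with unit `1`, and
`ab = α(a ⋆ b)` exhibits `mul` as the Yau twist of this algebra by the algebra automorphism `α`.
For the untwisted algebra, `D := Δ ∘ α` is an ordinary bialgebra comultiplication with counit `ε`,
`σ` is an ordinary Drinfeld twist of `D` (the two twist equations coincide because `σ` is
`α ⊗ α`-invariant), and `Δᵠ = (α ⊗ α) ∘ Dᵠ` with `Dᵠ(x) = σ D(x) ϱ`. Drinfeld's classical argument
shows that `Dᵠ` is again a bialgebra comultiplication; it commutes with `α`, and the Yau twist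
`(α ∘ m, (α ⊗ α) ∘ Dᵠ)` of a bialgebra by a bialgebra automorphism is a Hom-bialgebra.
-/
namespace HomTwist
open TensorProduct

theorem map_mul_mul_of_map_eq_one {F M N : Type*} [Monoid M] [Monoid N] [FunLike F M N]
    [MonoidHomClass F M N] (f : F) {σ ϱ : M} (h : σ * ϱ = 1) (hf : f σ = 1) (x : M) :
    f (σ * x * ϱ) = f x := by
  have hϱ : f ϱ = 1 := by
    calc f ϱ = f σ * f ϱ := by rw [hf, one_mul]
      _ = 1 := by rw [← map_mul, h, map_one]
  rw [map_mul, map_mul, hf, hϱ, one_mul, mul_one]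

section TensorAlgebra
variable {k A B : Type*} [CommRing k] [Ring A] [Algebra k A] [Ring B] [Algebra k B]

@[simp]
theorem pairMap_tmul {H₁ H₂ C D : Type*} [AddCommGroup H₁] [Module k H₁]
    [AddCommGroup H₂] [Module k H₂] [AddCommGroup C] [Module k C] [AddCommGroup D] [Module k D]
    (f : H₁ →ₗ[k] C →ₗ[k] C) (g : H₂ →ₗ[k] D →ₗ[k] D) (h₁ : H₁) (h₂ : H₂) (c : C) (d : D) :
    pairMap f g (h₁ ⊗ₜ h₂) (c ⊗ₜ d) = f h₁ c ⊗ₜ g h₂ d :=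
  rfl

theorem mulT_mul : mulT (LinearMap.mul k A) = LinearMap.mul k (A ⊗[k] A) := by
  ext
  simp [mulT]

theorem map_id_mul_apply (x : B) (W : A ⊗[k] B) :
    TensorProduct.map LinearMap.id (LinearMap.mul k B x) W = (1 ⊗ₜ x) * W := by
  induction W using TensorProduct.induction_on with
  | zero => simp
  | add W W' hW hW' => simp only [map_add, mul_add, hW, hW']
  | tmul a b => simp

theorem map_mul_id_apply (x : A) (W : A ⊗[k] B) :
    TensorProduct.map (LinearMap.mul k A x) LinearMap.id W = (x ⊗ₜ 1) * W := by
  induction W using TensorProduct.induction_on with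
  | zero => simp
  | add W W' hW hW' => simp only [map_add, mul_add, hW, hW']
  | tmul a b => simp

end TensorAlgebra

section DrinfeldTwist
variable {k A : Type*} [CommRing k] [Ring A] [Algebra k A]
  {Δ : A →ₗ[k] A ⊗[k] A} {ε : A →ₗ[k] k} {σ ϱ : A ⊗[k] A}

theorem twistComul_mul_apply (x : A) :
    twistComul (LinearMap.mul k A) Δ σ ϱ x = σ * Δ x * ϱ := by
  simp [twistComul, mulT_mul]

theorem map_id_twistComul_apply (z : A ⊗[k] A) :
    TensorProduct.map LinearMap.id (twistComul (LinearMap.mul k A) Δ σ ϱ) z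
      = (1 ⊗ₜ σ) * TensorProduct.map LinearMap.id Δ z * (1 ⊗ₜ ϱ) := by
  induction z using TensorProduct.induction_on with
  | zero => simp
  | add z z' hz hz' => simp only [map_add, mul_add, add_mul, hz, hz']
  | tmul a b => simp [twistComul_mul_apply]

theorem map_twistComul_id_apply (z : A ⊗[k] A) :
    TensorProduct.map (twistComul (LinearMap.mul k A) Δ σ ϱ) LinearMap.id z
      = (σ ⊗ₜ 1) * TensorProduct.map Δ LinearMap.id z * (ϱ ⊗ₜ 1) := by
  induction z using TensorProduct.induction_on with
  | zero => simp
  | add z z' hz hz' => simp only [map_add, mul_add, add_mul, hz, hz']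
  | tmul a b => simp [twistComul_mul_apply]

namespace IsTwist
variable {alpha : A ≃ₗ[k] A} (hσ : IsTwist (LinearMap.mul k A) 1 alpha Δ ε σ ϱ)
include hσ

theorem mul_eq_one : σ * ϱ = 1 := by
  simpa [mulT_mul, Algebra.TensorProduct.one_def] using hσ.mul_inv

theorem mul_eq_one' : ϱ * σ = 1 := by
  simpa [mulT_mul, Algebra.TensorProduct.one_def] using hσ.inv_mul

end IsTwist

namespace IsBialgebra
variable (hA : IsBialgebra (LinearMap.mul k A) 1 Δ ε)

def comulAlgHom : A →ₐ[k] A ⊗[k] A :=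
  AlgHom.ofLinearMap Δ (hA.comul_one.trans Algebra.TensorProduct.one_def.symm) fun a b => by
    simpa [mulT_mul] using hA.comul_mul a b

def counitAlgHom : A →ₐ[k] k :=
  AlgHom.ofLinearMap ε hA.counit_one hA.counit_mul

variable {alpha : A ≃ₗ[k] A} (hσ : IsTwist (LinearMap.mul k A) 1 alpha Δ ε σ ϱ)
include hA hσ

theorem coassoc_twistComul (c : A) :
    TensorProduct.map LinearMap.id (twistComul (LinearMap.mul k A) Δ σ ϱ)
        (twistComul (LinearMap.mul k A) Δ σ ϱ c)
      = TensorProduct.assoc k A A A (TensorProduct.map (twistComul (LinearMap.mul k A) Δ σ ϱ)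
          LinearMap.id (twistComul (LinearMap.mul k A) Δ σ ϱ c)) := by
  set L := Algebra.TensorProduct.map (AlgHom.id k A) hA.comulAlgHom
  set R := Algebra.TensorProduct.map hA.comulAlgHom (AlgHom.id k A)
  set φ := Algebra.TensorProduct.assoc k k k A A A
  have hL : ∀ z, TensorProduct.map LinearMap.id (twistComul (LinearMap.mul k A) Δ σ ϱ) z
      = (1 ⊗ₜ σ) * L z * (1 ⊗ₜ ϱ) := map_id_twistComul_apply
  have hR : ∀ z, TensorProduct.map (twistComul (LinearMap.mul k A) Δ σ ϱ) LinearMap.id z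
      = (σ ⊗ₜ 1) * R z * (ϱ ⊗ₜ 1) := map_twistComul_id_apply
  have hcocycle : (1 ⊗ₜ σ) * L σ = φ ((σ ⊗ₜ 1) * R σ) := by
    have h := hσ.T3
    simp only [mulT_mul, map_id_mul_apply, map_mul_id_apply] at h
    exact h
  have hinvL : ((1 ⊗ₜ σ) * L σ) * (L ϱ * (1 ⊗ₜ ϱ)) = 1 := by
    rw [mul_assoc, ← mul_assoc (L σ), ← map_mul, hσ.mul_eq_one, map_one, one_mul,
      Algebra.TensorProduct.tmul_mul_tmul, one_mul, hσ.mul_eq_one]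
    exact Algebra.TensorProduct.one_def.symm
  have hinvR : (R ϱ * (ϱ ⊗ₜ 1)) * ((σ ⊗ₜ 1) * R σ) = 1 := by
    rw [mul_assoc, ← mul_assoc (ϱ ⊗ₜ 1), Algebra.TensorProduct.tmul_mul_tmul, one_mul,
      hσ.mul_eq_one', ← Algebra.TensorProduct.one_def, one_mul, ← map_mul, hσ.mul_eq_one', map_one]
  -- both sides are inverse to `(1 ⊗ σ) * L σ = φ ((σ ⊗ 1) * R σ)`
  have hcocycle_inv : L ϱ * (1 ⊗ₜ ϱ) = φ (R ϱ * (ϱ ⊗ₜ 1)) :=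
    (left_inv_eq_right_inv (by rw [hcocycle, ← map_mul, hinvR, map_one]) hinvL).symm
  have hcoassoc : L (Δ c) = φ (R (Δ c)) := hA.coassoc c
  calc _ = ((1 ⊗ₜ σ) * L σ) * L (Δ c) * (L ϱ * (1 ⊗ₜ ϱ)) := by
        rw [hL, twistComul_mul_apply, map_mul, map_mul]
        simp only [mul_assoc]
    _ = φ ((σ ⊗ₜ 1) * R σ) * φ (R (Δ c)) * φ (R ϱ * (ϱ ⊗ₜ 1)) := by
        rw [hcocycle, hcoassoc, hcocycle_inv]
    _ = _ := by
        rw [hR, twistComul_mul_apply, ← map_mul, ← map_mul, map_mul R, map_mul R]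
        simp only [mul_assoc]
        rfl

theorem twist : IsBialgebra (LinearMap.mul k A) 1 (twistComul (LinearMap.mul k A) Δ σ ϱ) ε where
  assoc := hA.assoc
  one_mul' := hA.one_mul'
  mul_one' := hA.mul_one'
  coassoc := hA.coassoc_twistComul hσ
  counit_id c := by
    rw [twistComul_mul_apply]
    exact (map_mul_mul_of_map_eq_one ((Algebra.TensorProduct.lid k A).toAlgHom.comp
      (Algebra.TensorProduct.map hA.counitAlgHom (AlgHom.id k A))) hσ.mul_eq_one hσ.T2l _).trans
      (hA.counit_id c)
  id_counit c := by
    rw [twistComul_mul_apply]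
    exact (map_mul_mul_of_map_eq_one ((Algebra.TensorProduct.rid k k A).toAlgHom.comp
      (Algebra.TensorProduct.map (AlgHom.id k A) hA.counitAlgHom)) hσ.mul_eq_one hσ.T2r _).trans
      (hA.id_counit c)
  comul_mul a b := by
    have hΔ : Δ (a * b) = Δ a * Δ b := map_mul hA.comulAlgHom a b
    simp only [twistComul_mul_apply, mulT_mul, LinearMap.mul_apply', hΔ]
    calc σ * (Δ a * Δ b) * ϱ = σ * Δ a * (ϱ * σ) * Δ b * ϱ := by
          rw [hσ.mul_eq_one', mul_one]
          simp only [mul_assoc]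
      _ = σ * Δ a * ϱ * (σ * Δ b * ϱ) := by simp only [mul_assoc]
  comul_one := by
    rw [twistComul_mul_apply, hA.comul_one, ← Algebra.TensorProduct.one_def, mul_one,
      hσ.mul_eq_one, Algebra.TensorProduct.one_def]
  counit_mul := hA.counit_mul
  counit_one := hA.counit_one

end IsBialgebra
end DrinfeldTwist

section Untwist
variable {k H : Type*} [CommRing k] [AddCommGroup H] [Module k H]
  {mul : H →ₗ[k] H →ₗ[k] H} {one : H} {alpha : H ≃ₗ[k] H}

theorem IsMonHomBialgebra.toIsMonHomAlgebra {comul : H →ₗ[k] H ⊗[k] H} {counit : H →ₗ[k] k}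
    (h : IsMonHomBialgebra mul one alpha comul counit) : IsMonHomAlgebra mul one alpha :=
  ⟨h.alpha_mul, h.hom_assoc, h.alpha_one, h.one_mul', h.mul_one'⟩

namespace IsMonHomAlgebra
variable (h : IsMonHomAlgebra mul one alpha)
include h

theorem alpha_symm_mul (x y : H) : alpha.symm (mul x y) = mul (alpha.symm x) (alpha.symm y) :=
  alpha.injective <| by simp [h.alpha_mul]

abbrev untwistRing : Ring H where
  mul a b := alpha.symm (mul a b)
  one := one
  left_distrib a b c := by change alpha.symm _ = alpha.symm _ + alpha.symm _; simp
  right_distrib a b c := by change alpha.symm _ = alpha.symm _ + alpha.symm _; simp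
  zero_mul a := by change alpha.symm _ = 0; simp
  mul_zero a := by change alpha.symm _ = 0; simp
  mul_assoc a b c := by
    change alpha.symm (mul (alpha.symm (mul a b)) c) = alpha.symm (mul a (alpha.symm (mul b c)))
    congr 1
    calc mul (alpha.symm (mul a b)) c
        = mul (mul (alpha.symm a) (alpha.symm b)) (alpha (alpha.symm c)) := by
          rw [h.alpha_symm_mul, alpha.apply_symm_apply]
      _ = mul (alpha (alpha.symm a)) (mul (alpha.symm b) (alpha.symm c)) :=
          (h.hom_assoc _ _ _).symm
      _ = mul a (alpha.symm (mul b c)) := by rw [alpha.apply_symm_apply, h.alpha_symm_mul]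
  one_mul a := by change alpha.symm (mul one a) = a; rw [h.one_mul', alpha.symm_apply_apply]
  mul_one a := by change alpha.symm (mul a one) = a; rw [h.mul_one', alpha.symm_apply_apply]

abbrev untwistAlgebra :
    letI := h.untwistRing
    Algebra k H :=
  letI := h.untwistRing
  Algebra.ofModule (fun r x y => by change alpha.symm (mul (r • x) y) = r • alpha.symm _; simp)
    (fun r x y => by change alpha.symm (mul x (r • y)) = r • alpha.symm _; simp)

def untwistAlgEquiv :
    letI := h.untwistRing
    letI := h.untwistAlgebra
    H ≃ₐ[k] H :=
  letI := h.untwistRing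
  letI := h.untwistAlgebra
  AlgEquiv.ofLinearEquiv alpha h.alpha_one fun a b => by
    change alpha (alpha.symm (mul a b)) = alpha.symm (mul (alpha a) (alpha b))
    rw [← h.alpha_mul, alpha.apply_symm_apply, alpha.symm_apply_apply]

end IsMonHomAlgebra
end Untwist

section YauTwist
variable {k A : Type*} [CommRing k] [Ring A] [Algebra k A]
  {mul : A →ₗ[k] A →ₗ[k] A} {e : A ≃ₐ[k] A}
  {comul : A →ₗ[k] A ⊗[k] A} {counit : A →ₗ[k] k} {σ ϱ : A ⊗[k] A}

theorem mulT_apply_of_yau (hmul : ∀ a b, mul a b = e (a * b)) (X Y : A ⊗[k] A) :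
    mulT mul X Y = Algebra.TensorProduct.congr e e (X * Y) := by
  suffices mulT mul = (LinearMap.mul k _).compr₂ (Algebra.TensorProduct.congr e e).toLinearMap by
    rw [this]; rfl
  ext
  simp [mulT, hmul]

namespace IsMonHomBialgebra

theorem coassoc_untwist (hH : IsMonHomBialgebra mul 1 e.toLinearEquiv comul counit) (c : A) :
    TensorProduct.map LinearMap.id (comul ∘ₗ e.toLinearMap) (comul (e c))
      = TensorProduct.assoc k A A A
          (TensorProduct.map (comul ∘ₗ e.toLinearMap) LinearMap.id (comul (e c))) := by
  set ee := TensorProduct.map e.toLinearMap e.toLinearMap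
  have hcomul : ∀ x, comul (e x) = ee (comul x) := hH.comul_alpha
  have hL : TensorProduct.map e.toLinearMap ee ∘ₗ TensorProduct.map e.symm.toLinearMap comul
      = TensorProduct.map LinearMap.id (comul ∘ₗ e.toLinearMap) := by
    ext
    simp [hcomul]
  have hR : TensorProduct.map ee e.toLinearMap ∘ₗ TensorProduct.map comul e.symm.toLinearMap
      = TensorProduct.map (comul ∘ₗ e.toLinearMap) LinearMap.id := by
    ext
    simp [hcomul]
  have hcoassoc : TensorProduct.map e.symm.toLinearMap comul (comul (e c))
      = TensorProduct.assoc k A A A (TensorProduct.map comul e.symm.toLinearMap (comul (e c))) :=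
    hH.hom_coassoc (e c)
  rw [← hL, ← hR, LinearMap.comp_apply, LinearMap.comp_apply, hcoassoc,
    TensorProduct.map_map_assoc]

theorem isBialgebra_untwist (hmul : ∀ a b, mul a b = e (a * b))
    (hH : IsMonHomBialgebra mul 1 e.toLinearEquiv comul counit) :
    IsBialgebra (LinearMap.mul k A) 1 (comul ∘ₗ e.toLinearMap) counit where
  assoc := mul_assoc
  one_mul' := one_mul
  mul_one' := mul_one
  coassoc := hH.coassoc_untwist
  counit_id c := by simpa using hH.counit_id (e c)
  id_counit c := by simpa using hH.id_counit (e c)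
  comul_mul a b := by
    have hcomul : ∀ x, comul (e x) = Algebra.TensorProduct.congr e e (comul x) := hH.comul_alpha
    simp only [LinearMap.comp_apply, LinearMap.mul_apply', mulT_mul, AlgEquiv.toLinearMap_apply]
    rw [← hmul, hH.comul_mul, mulT_apply_of_yau hmul, map_mul, hcomul, hcomul]
  comul_one := by simp [hH.comul_one]
  counit_mul a b := by
    have hcounit : ∀ x, counit (e x) = counit x := hH.counit_alpha
    rw [LinearMap.mul_apply', ← hcounit, ← hmul, hH.counit_mul]
  counit_one := hH.counit_one

end IsMonHomBialgebra

theorem IsTwist.mulT_comul_of_yau (hmul : ∀ a b, mul a b = e (a * b))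
    (hH : IsMonHomBialgebra mul 1 e.toLinearEquiv comul counit)
    (hσ : IsTwist mul 1 e.toLinearEquiv comul counit σ ϱ) (x : A) :
    mulT mul σ (comul x) = σ * comul (e x) := by
  have hcomul : comul (e x) = Algebra.TensorProduct.congr e e (comul x) := hH.comul_alpha x
  have hσe : Algebra.TensorProduct.congr e e σ = σ := hσ.T1
  rw [mulT_apply_of_yau hmul, map_mul, hσe, hcomul]

theorem IsTwist.untwist (hmul : ∀ a b, mul a b = e (a * b))
    (hH : IsMonHomBialgebra mul 1 e.toLinearEquiv comul counit)
    (hσ : IsTwist mul 1 e.toLinearEquiv comul counit σ ϱ) :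
    IsTwist (LinearMap.mul k A) 1 e.toLinearEquiv (comul ∘ₗ e.toLinearMap) counit σ ϱ where
  mul_inv := by
    apply (Algebra.TensorProduct.congr e e).injective
    rw [mulT_mul, LinearMap.mul_apply', ← mulT_apply_of_yau hmul, hσ.mul_inv]
    simp
  inv_mul := by
    apply (Algebra.TensorProduct.congr e e).injective
    rw [mulT_mul, LinearMap.mul_apply', ← mulT_apply_of_yau hmul, hσ.inv_mul]
    simp
  T1 := hσ.T1
  T2l := hσ.T2l
  T2r := hσ.T2r
  T3 := by
    have hmap : mulT (LinearMap.mul k A) σ ∘ₗ (comul ∘ₗ e.toLinearMap) = mulT mul σ ∘ₗ comul :=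
      LinearMap.ext fun x => by simp [mulT_mul, hσ.mulT_comul_of_yau hmul hH]
    have h := hσ.T3
    simp only [← LinearMap.comp_apply, ← TensorProduct.map_comp, LinearMap.id_comp] at h ⊢
    rwa [hmap]

theorem twistComul_eq_of_yau (hmul : ∀ a b, mul a b = e (a * b))
    (hH : IsMonHomBialgebra mul 1 e.toLinearEquiv comul counit)
    (hσ : IsTwist mul 1 e.toLinearEquiv comul counit σ ϱ) :
    twistComul mul comul σ ϱ = (Algebra.TensorProduct.congr e e).toLinearMap
      ∘ₗ twistComul (LinearMap.mul k A) (comul ∘ₗ e.toLinearMap) σ ϱ := by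
  ext x
  rw [LinearMap.comp_apply, twistComul_mul_apply, AlgEquiv.toLinearMap_apply,
    LinearMap.comp_apply, AlgEquiv.toLinearMap_apply, ← hσ.mulT_comul_of_yau hmul hH,
    ← mulT_apply_of_yau hmul]
  rfl

namespace IsBialgebra
variable {Δ : A →ₗ[k] A ⊗[k] A} {ε : A →ₗ[k] k}

theorem hom_coassoc_yau (hA : IsBialgebra (LinearMap.mul k A) 1 Δ ε)
    (hΔ : ∀ x, Δ (e x) = Algebra.TensorProduct.congr e e (Δ x)) (c : A) :
    TensorProduct.map e.toLinearMap ((Algebra.TensorProduct.congr e e).toLinearMap ∘ₗ Δ)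
        (Algebra.TensorProduct.congr e e (Δ c))
      = TensorProduct.assoc k A A A
          (TensorProduct.map ((Algebra.TensorProduct.congr e e).toLinearMap ∘ₗ Δ) e.toLinearMap
            (Algebra.TensorProduct.congr e e (Δ c))) := by
  have hee : (Algebra.TensorProduct.congr e e).toLinearMap
      = TensorProduct.map e.toLinearMap e.toLinearMap := rfl
  have hL : TensorProduct.map e.toLinearMap ((Algebra.TensorProduct.congr e e).toLinearMap ∘ₗ Δ)
      = TensorProduct.map e.toLinearMap (TensorProduct.map e.toLinearMap e.toLinearMap)
          ∘ₗ TensorProduct.map LinearMap.id Δ := by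
    rw [← TensorProduct.map_comp, LinearMap.comp_id, hee]
  have hR : TensorProduct.map ((Algebra.TensorProduct.congr e e).toLinearMap ∘ₗ Δ) e.toLinearMap
      = TensorProduct.map (TensorProduct.map e.toLinearMap e.toLinearMap) e.toLinearMap
          ∘ₗ TensorProduct.map Δ LinearMap.id := by
    rw [← TensorProduct.map_comp, LinearMap.comp_id, hee]
  rw [← hΔ, hL, hR, LinearMap.comp_apply, LinearMap.comp_apply, hA.coassoc,
    TensorProduct.map_map_assoc]

theorem isHomBialgebra_yau (hmul : ∀ a b, mul a b = e (a * b))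
    (hA : IsBialgebra (LinearMap.mul k A) 1 Δ ε)
    (hΔ : ∀ x, Δ (e x) = Algebra.TensorProduct.congr e e (Δ x)) (hε : ∀ x, ε (e x) = ε x) :
    IsHomBialgebra mul 1 e.toLinearEquiv
      ((Algebra.TensorProduct.congr e e).toLinearMap ∘ₗ Δ) ε where
  alpha_mul a b := by simp [hmul]
  hom_assoc a b c := by simp [hmul, mul_assoc]
  alpha_one := map_one e
  one_mul' a := by simp [hmul]
  mul_one' a := by simp [hmul]
  comul_alpha c := by simp [hΔ]; rfl
  hom_coassoc := hA.hom_coassoc_yau hΔ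
  counit_alpha := hε
  counit_id c := by
    have h : (TensorProduct.lid k A).toLinearMap ∘ₗ TensorProduct.map ε LinearMap.id
          ∘ₗ (Algebra.TensorProduct.congr e e).toLinearMap
        = e.toLinearMap ∘ₗ (TensorProduct.lid k A).toLinearMap
            ∘ₗ TensorProduct.map ε LinearMap.id := by
      ext
      simp [hε]
    simpa [hA.counit_id c] using congr($h (Δ c))
  id_counit c := by
    have h : (TensorProduct.rid k A).toLinearMap ∘ₗ TensorProduct.map LinearMap.id ε
          ∘ₗ (Algebra.TensorProduct.congr e e).toLinearMap
        = e.toLinearMap ∘ₗ (TensorProduct.rid k A).toLinearMap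
            ∘ₗ TensorProduct.map LinearMap.id ε := by
      ext
      simp [hε]
    simpa [hA.id_counit c] using congr($h (Δ c))
  comul_mul a b := by
    have hΔmul : Δ (a * b) = Δ a * Δ b := map_mul hA.comulAlgHom a b
    simp only [LinearMap.comp_apply, AlgEquiv.toLinearMap_apply]
    rw [hmul, hΔ, hΔmul, mulT_apply_of_yau hmul, map_mul, map_mul]
  comul_one := by simp [hA.comul_one]
  counit_mul a b := by rw [hmul, hε]; exact hA.counit_mul a b
  counit_one := hA.counit_one

end IsBialgebra

namespace IsTwist
variable {Δ : A →ₗ[k] A ⊗[k] A} {ε : A →ₗ[k] k}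
  (hσ : IsTwist (LinearMap.mul k A) 1 e.toLinearEquiv Δ ε σ ϱ)
include hσ

theorem congr_inv_eq_self : Algebra.TensorProduct.congr e e ϱ = ϱ := by
  have hσe : Algebra.TensorProduct.congr e e σ = σ := hσ.T1
  refine left_inv_eq_right_inv ?_ hσ.mul_eq_one
  rw [← hσe, ← map_mul, hσ.mul_eq_one', map_one]

theorem twistComul_alpha (hΔ : ∀ x, Δ (e x) = Algebra.TensorProduct.congr e e (Δ x)) (x : A) :
    twistComul (LinearMap.mul k A) Δ σ ϱ (e x)
      = Algebra.TensorProduct.congr e e (twistComul (LinearMap.mul k A) Δ σ ϱ x) := by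
  have hσe : Algebra.TensorProduct.congr e e σ = σ := hσ.T1
  rw [twistComul_mul_apply, twistComul_mul_apply, hΔ, map_mul, map_mul, hσe, hσ.congr_inv_eq_self]

end IsTwist

end YauTwist

/-- (Theorem 4.6) `Hᵠ = (H, α, m, η, Δᵠ, ε)` with
`Δᵠ(x) = (σΔ(x))ϱ` is a Hom-bialgebra. -/
theorem twisted_is_hom_bialgebra
    {k H : Type*} [CommRing k] [AddCommGroup H] [Module k H]
    (mul : H →ₗ[k] H →ₗ[k] H) (one : H) (alpha : H ≃ₗ[k] H)
    (comul : H →ₗ[k] H ⊗[k] H) (counit : H →ₗ[k] k) (σ ϱ : H ⊗[k] H)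
    (hH : IsMonHomBialgebra mul one alpha comul counit)
    (hσ : IsTwist mul one alpha comul counit σ ϱ) :
    IsHomBialgebra mul one alpha (twistComul mul comul σ ϱ) counit := by
  have hA := hH.toIsMonHomAlgebra
  let := hA.untwistRing
  let := hA.untwistAlgebra
  have hmul : ∀ a b, mul a b = hA.untwistAlgEquiv (a * b) :=
    fun a b => (alpha.apply_symm_apply _).symm
  have hτ := hσ.untwist hmul hH
  rw [twistComul_eq_of_yau hmul hH hσ]
  exact ((hH.isBialgebra_untwist hmul).twist hτ).isHomBialgebra_yau hmul
    (hτ.twistComul_alpha fun x => hH.comul_alpha (alpha x)) hH.counit_alpha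

end HomTwist
end

section
/- Let (H, α) be a monoidal Hom-bialgebra with Drinfeld twist σ. Then the Hom-bialgebra Hᵠ (with product m and coproduct Δᵠ(x) = (σΔ(x))ϱ) equals the Hom-bialgebra ((ₐH)ᵠ)ᵅ obtained by first untwisting H to the ordinary bialgebra ₐH = (H, α⁻¹∘m, Δ∘α), then twisting its coproduct by σ in the classical sense, then re-twisting by α via product α∘(α⁻¹∘m) and coproduct ((σ *Δ_{ₐH})* ϱ)∘α. In particular their coproducts coincide: Δ_{((ₐH)ᵠ)ᵅ}(x) = (σΔ(x))ϱ for all x ∈ H. -/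
open TensorProduct

namespace HomTwist
open TensorProduct

/-!
On `H ⊗ H` the componentwise product of `ₐH` is `x *' y = (α ⊗ α)⁻¹ (x y)`. Since `H ⊗ H` is
again a monoidal Hom-algebra with structure map `α ⊗ α`, and `α ⊗ α` fixes `σ` and therefore
also its inverse `ϱ`, a factor `σ` or `ϱ` commutes with `α ⊗ α` in a product. Hence the two
applications of `(α ⊗ α)⁻¹` coming from `*'` cancel the `(α ⊗ α)²` coming from `Δ ∘ α ∘ α`.
-/

namespace IsMonHomAlgebra

variable {k A : Type*} [CommRing k] [AddCommGroup A] [Module k A]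
  {mul : A →ₗ[k] A →ₗ[k] A} {one : A} {alpha : A ≃ₗ[k] A}

theorem alpha_mul_of_alpha_eq_left (hA : IsMonHomAlgebra mul one alpha) {a : A}
    (ha : alpha a = a) (b : A) : alpha (mul a b) = mul a (alpha b) := by
  rw [hA.alpha_mul, ha]

theorem alpha_mul_of_alpha_eq_right (hA : IsMonHomAlgebra mul one alpha) (a : A) {b : A}
    (hb : alpha b = b) : alpha (mul a b) = mul (alpha a) b := by
  rw [hA.alpha_mul, hb]

/-- Hom-associativity on `(b, a, α b)` reads `α² b = α³ b`, because `a (α b) = α (a b) = 1`. -/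
theorem alpha_eq_of_mul_eq_one (hA : IsMonHomAlgebra mul one alpha) {a b : A}
    (ha : alpha a = a) (hab : mul a b = one) (hba : mul b a = one) : alpha b = b := by
  have hab' : mul a (alpha b) = one := by
    rw [← hA.alpha_mul_of_alpha_eq_left ha, hab, hA.alpha_one]
  have h := hA.hom_assoc b a (alpha b)
  rw [hab', hba, hA.mul_one', hA.one_mul'] at h
  exact (alpha.injective (alpha.injective h)).symm

end IsMonHomAlgebra

section TensorSquare

variable {k H : Type*} [CommRing k] [AddCommGroup H] [Module k H]

@[simp]
theorem mulT_tmul (mul : H →ₗ[k] H →ₗ[k] H) (a b c d : H) :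
    mulT mul (a ⊗ₜ[k] b) (c ⊗ₜ[k] d) = mul a c ⊗ₜ[k] mul b d := rfl

theorem mulT_compr₂ (mul : H →ₗ[k] H →ₗ[k] H) (g : H →ₗ[k] H) (x y : H ⊗[k] H) :
    mulT (mul.compr₂ g) x y = map g g (mulT mul x y) := by
  suffices mulT (mul.compr₂ g) = (mulT mul).compr₂ (map g g) by rw [this]; rfl
  ext a b c d
  rfl

variable {mul : H →ₗ[k] H →ₗ[k] H} {one : H} {alpha : H ≃ₗ[k] H}

theorem IsMonHomBialgebra.isMonHomAlgebra {comul : H →ₗ[k] H ⊗[k] H} {counit : H →ₗ[k] k}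
    (hH : IsMonHomBialgebra mul one alpha comul counit) : IsMonHomAlgebra mul one alpha :=
  ⟨hH.alpha_mul, hH.hom_assoc, hH.alpha_one, hH.one_mul', hH.mul_one'⟩

theorem IsMonHomAlgebra.tensorSquare (hA : IsMonHomAlgebra mul one alpha) :
    IsMonHomAlgebra (mulT mul) (one ⊗ₜ[k] one) (TensorProduct.congr alpha alpha) where
  alpha_mul x y := by
    induction x using TensorProduct.induction_on <;>
      induction y using TensorProduct.induction_on <;>
      simp_all [hA.alpha_mul]
  hom_assoc x y z := by
    induction x using TensorProduct.induction_on <;>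
      induction y using TensorProduct.induction_on <;>
      induction z using TensorProduct.induction_on <;>
      simp_all [hA.hom_assoc]
  alpha_one := by simp [hA.alpha_one]
  one_mul' y := by
    induction y using TensorProduct.induction_on <;> simp_all [hA.one_mul']
  mul_one' y := by
    induction y using TensorProduct.induction_on <;> simp_all [hA.mul_one']

end TensorSquare

/-- (Theorem 4.7, first part) `Hᵠ = ((ₐH)ᵠ)ᵅ` as Hom-bialgebras:
the product of `((ₐH)ᵠ)ᵅ` is the original product `m`, and its coproduct
`x ↦ (σ *' Δ_{ₐH}(α(α x))) *' ϱ` (with `x *' y = α⁻¹(xy)` the product of `ₐH`)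
coincides with `Δᵠ(x) = (σΔ(x))ϱ`. -/
theorem twisted_equals_untwist_twist_retwist
    {k H : Type*} [CommRing k] [AddCommGroup H] [Module k H]
    (mul : H →ₗ[k] H →ₗ[k] H) (one : H) (alpha : H ≃ₗ[k] H)
    (comul : H →ₗ[k] H ⊗[k] H) (counit : H →ₗ[k] k) (σ ϱ : H ⊗[k] H)
    (hH : IsMonHomBialgebra mul one alpha comul counit)
    (hσ : IsTwist mul one alpha comul counit σ ϱ) :
    -- products agree: `α ∘ m_{ₐH} = m`
    (∀ x y, alpha ((mul.compr₂ alpha.symm.toLinearMap) x y) = mul x y)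
    -- coproducts agree: `Δ_{((ₐH)ᵠ)ᵅ} = Δᵠ`
    ∧ (∀ x, mulT (mul.compr₂ alpha.symm.toLinearMap)
          (mulT (mul.compr₂ alpha.symm.toLinearMap) σ (comul (alpha (alpha x)))) ϱ
        = twistComul mul comul σ ϱ x) := by
  set E := TensorProduct.congr alpha alpha
  have hT := hH.isMonHomAlgebra.tensorSquare
  have hσE : E σ = σ := hσ.T1
  have hϱE : E ϱ = ϱ := hT.alpha_eq_of_mul_eq_one hσE hσ.mul_inv hσ.inv_mul
  refine ⟨fun x y => by simp, fun x => ?_⟩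
  have hΔ : comul (alpha (alpha x)) = E (E (comul x)) := by
    rw [hH.comul_alpha, hH.comul_alpha]; rfl
  rw [mulT_compr₂, mulT_compr₂, hΔ]
  change E.symm (mulT mul (E.symm (mulT mul σ (E (E (comul x))))) ϱ) = _
  rw [← hT.alpha_mul_of_alpha_eq_left hσE, ← hT.alpha_mul_of_alpha_eq_left hσE,
    E.symm_apply_apply, ← hT.alpha_mul_of_alpha_eq_right _ hϱE, E.symm_apply_apply]
  rfl

end HomTwist
end
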